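/- arXiv:1605.02125 — 4 statements merged into one kernel-verified Lean document; each statement's English description precedes it below -/
import Mathlib

section
/- For all sequences ε = (ε_k)_{k≥0} and ε' = (ε'_k)_{k≥0} of complex numbers and all x, y ∈ ℂ[F], the following free Cotlar identity holds in ℂ[F]: (H_ε x)·(H_{ε'} y)* − τ((H_ε x − ε₀·x)·(H_{ε'} y − ε'₀·y)*)·λ_e = H_ε(x·H_{ε'}^{op}(y*)) + H_{ε'}^{op}((H_ε x)·y*) − H_{ε'}^{op}(H_ε(x·y*)). -/
open scoped Classical

noncomputable section

abbrev F := FreeGroup ℕ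
abbrev A := MonoidAlgebra ℂ F

def lam (w : F) : A := MonoidAlgebra.single w 1

def tau (x : A) : ℂ := x.coeff 1

def len (w : F) : ℕ := w.toWord.length

abbrev Letter := ℕ × Bool

def firstL (w : F) : Option Letter := w.toWord.head?
def lastL (w : F) : Option Letter := w.toWord.getLast?

def invLetter (s : Letter) : Letter := (s.1, !s.2)

/-- `g` is a prefix of `w` : `|g⁻¹w| = |w| - |g|`. -/
def isPrefix (g w : F) : Prop := len g + len (g⁻¹ * w) = len w

/-- the involution `x* (w) = conj (x (w⁻¹))`. -/
def starA (x : A) : A :=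
  MonoidAlgebra.ofCoeff (Finsupp.mapDomain (fun w : F => w⁻¹)
    (Finsupp.mapRange (fun c => (starRingEnd ℂ) c) (by simp) x.coeff))

def Ls (s : Letter) (x : A) : A := MonoidAlgebra.ofCoeff (Finsupp.filter (fun w => firstL w = some s) x.coeff)
def Rs (s : Letter) (x : A) : A := MonoidAlgebra.ofCoeff (Finsupp.filter (fun w => lastL w = some s) x.coeff)

def Lk (k : ℕ) (x : A) : A := Ls (k, true) x + Ls (k, false) x
def Rk (k : ℕ) (x : A) : A := Rs (k, true) x + Rs (k, false) x

def Lh (h : F) (x : A) : A := MonoidAlgebra.ofCoeff (Finsupp.filter (fun w => isPrefix h w) x.coeff)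

def Heps (εe : ℂ) (ε : ℕ → ℂ) (x : A) : A :=
  (εe * tau x) • lam 1 + ∑ᶠ k : ℕ, ε k • Lk k x

def HepsOp (εe : ℂ) (ε : ℕ → ℂ) (x : A) : A :=
  ((starRingEnd ℂ) εe * tau x) • lam 1 + ∑ᶠ k : ℕ, ((starRingEnd ℂ) (ε k)) • Rk k x

/-- noncommutative `L^{2^m}` norm. -/
def Lnorm (m : ℕ) (x : A) : ℝ :=
  (tau ((starA x * x) ^ (2 ^ (m - 1)))).re ^ ((1 : ℝ) / (2 ^ m : ℝ))

/-- `(τ(y^{2^{m-1}}))^{1/2^m}` for positive `y`. -/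
def Qnorm (m : ℕ) (y : A) : ℝ :=
  (tau (y ^ (2 ^ (m - 1)))).re ^ ((1 : ℝ) / (2 ^ m : ℝ))

def ddag (x y : A) : A :=
  Finsupp.sum x.coeff fun g cg => Finsupp.sum y.coeff fun h ch =>
    if ¬ isPrefix g⁻¹ h then (cg * ch) • lam (g * h) else 0

def dag (x y : A) : A :=
  Finsupp.sum x.coeff fun g cg => Finsupp.sum y.coeff fun h ch =>
    if isPrefix g⁻¹ h ∧ g⁻¹ ≠ h then (cg * ch) • lam (g * h) else 0

/-!
`H_ε` and `H_ε^op` are diagonal in the basis `λ_w`: `H_ε λ_w = φ(w) λ_w` with `φ(w) = ε_k` when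
`first(w) = g_k^{±1}` (and `φ(e) = ε₀`), and likewise `H_ε^op` with `last(w)` and conjugated
coefficients; the involution intertwines the two. Both sides of the identity are therefore
bilinear in `(x, y*)`, and on basis vectors `λ_g, λ_h` they reduce to scalar multiples of `λ_{gh}`.
For `gh = e` the scalars agree by a ring identity. Otherwise the reduced word of `gh` either still
begins with `first(g)` or still ends with `last(h)`, so `φ(gh) = φ(g)` or `ψ(gh) = ψ(h)`, and either
equation makes the scalar identity collapse.
-/

namespace FreeGroup

variable {α : Type*} [DecidableEq α]

theorem head?_reduce_append_eq_or_getLast?_eq {L w : List (α × Bool)} (hL : IsReduced L)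
    (hw : IsReduced w) (hne : reduce (L ++ w) ≠ []) :
    (reduce (L ++ w)).head? = L.head? ∨ (reduce (L ++ w)).getLast? = w.getLast? := by
  induction L with
  | nil => exact .inr (by rw [List.nil_append, hw.reduce_eq])
  | cons a L ih =>
    rw [List.cons_append, reduce.cons] at hne ⊢
    rcases hr : reduce (L ++ w) with _ | ⟨b, t⟩
    · exact .inl rfl
    rw [hr] at hne ih
    dsimp only at hne ⊢
    split_ifs at hne ⊢ with hab
    · rcases ih hL.tail (List.cons_ne_nil b t) with hb | hb
      · obtain ⟨t', rfl⟩ : ∃ t', L = b :: t' := by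
          cases L with
          | nil => simp at hb
          | cons c t' => simp only [List.head?_cons, Option.some.injEq] at hb; exact ⟨t', hb ▸ rfl⟩
        have := (isReduced_cons_cons.1 hL).1 hab.1
        simp [hab.2] at this
      · obtain ⟨c, t', rfl⟩ := List.exists_cons_of_ne_nil hne
        exact .inr (by simpa using hb)
    · exact .inl rfl

theorem head?_toWord_mul_eq_or_getLast?_eq {x y : FreeGroup α} (hxy : x * y ≠ 1) :
    (x * y).toWord.head? = x.toWord.head? ∨ (x * y).toWord.getLast? = y.toWord.getLast? := by
  rw [toWord_mul]
  exact head?_reduce_append_eq_or_getLast?_eq isReduced_toWord isReduced_toWord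
    (by rwa [← toWord_mul, Ne, toWord_eq_nil_iff])

end FreeGroup

theorem firstL_eq_none_iff {w : F} : firstL w = none ↔ w = 1 := by
  rw [firstL, List.head?_eq_none_iff, FreeGroup.toWord_eq_nil_iff]

theorem lastL_eq_none_iff {w : F} : lastL w = none ↔ w = 1 := by
  rw [lastL, List.getLast?_eq_none_iff, FreeGroup.toWord_eq_nil_iff]

theorem firstL_mul_eq_or_lastL_mul_eq {g h : F} (hgh : g * h ≠ 1) :
    firstL (g * h) = firstL g ∨ lastL (g * h) = lastL h :=
  FreeGroup.head?_toWord_mul_eq_or_getLast?_eq hgh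

theorem lastL_inv (g : F) : lastL g⁻¹ = (firstL g).map invLetter := by
  rw [lastL, FreeGroup.toWord_inv, firstL, FreeGroup.invRev, List.getLast?_reverse, List.head?_map]
  rfl

theorem lam_mul_lam (g h : F) : lam g * lam h = lam (g * h) := by
  rw [lam, lam, lam, MonoidAlgebra.single_mul_single, one_mul]

theorem single_eq_smul_lam (g : F) (c : ℂ) : MonoidAlgebra.single g c = c • lam g := by
  rw [lam, MonoidAlgebra.smul_single', mul_one]

theorem tau_add (x y : A) : tau (x + y) = tau x + tau y := rfl

theorem tau_smul (c : ℂ) (x : A) : tau (c • x) = c * tau x := rfl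

theorem tau_lam (w : F) : tau (lam w) = if w = 1 then 1 else 0 := by
  rw [tau, lam, MonoidAlgebra.coeff_single, Finsupp.single_apply, eq_comm]

section LetterMultiplier

variable (read : F → Option Letter)

def readFilter (s : Letter) : A →ₗ[ℂ] A where
  toFun x := MonoidAlgebra.ofCoeff (x.coeff.filter fun w => read w = some s)
  map_add' x y := by rw [MonoidAlgebra.coeff_add, Finsupp.filter_add, MonoidAlgebra.ofCoeff_add]
  map_smul' c x := by
    rw [MonoidAlgebra.coeff_smul, Finsupp.filter_smul, MonoidAlgebra.ofCoeff_smul]; rfl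

abbrev readIndexFilter (k : ℕ) : A →ₗ[ℂ] A := readFilter read (k, true) + readFilter read (k, false)

variable {read}

theorem readFilter_eq_zero {s : Letter} {x : A} (h : ∀ w ∈ x.coeff.support, read w ≠ some s) :
    readFilter read s x = 0 := by
  refine congrArg MonoidAlgebra.ofCoeff ((Finsupp.filter_eq_zero_iff _ _).2 fun w hw => ?_)
  by_contra hx
  exact h w (Finsupp.mem_support_iff.2 hx) hw

theorem readFilter_lam (s : Letter) (w : F) :
    readFilter read s (lam w) = if read w = some s then lam w else 0 := by
  split_ifs with h
  · exact congrArg MonoidAlgebra.ofCoeff (Finsupp.filter_single_of_pos _ h)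
  · exact congrArg MonoidAlgebra.ofCoeff (Finsupp.filter_single_of_neg _ h)

theorem readIndexFilter_lam (k : ℕ) (w : F) :
    readIndexFilter read k (lam w) = if (read w).map Prod.fst = some k then lam w else 0 := by
  simp only [LinearMap.add_apply, readFilter_lam]
  rcases read w with _ | ⟨k', b⟩
  · simp
  · by_cases hk : k' = k <;> cases b <;> simp [hk]

theorem finite_support_readIndexFilter (x : A) :
    (Function.support fun k => readIndexFilter read k x).Finite := by
  refine (((x.coeff.support.finite_toSet).image fun w => (read w).map Prod.fst).preimage
    (Option.some_injective _).injOn).subset fun k hk => ?_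
  by_contra hnot
  have hread : ∀ b : Bool, ∀ w ∈ x.coeff.support, read w ≠ some (k, b) :=
    fun b w hw hr => hnot ⟨w, hw, by simp [hr]⟩
  exact hk (by simp [readFilter_eq_zero (hread true), readFilter_eq_zero (hread false)])

theorem finite_support_smul_readIndexFilter (ε : ℕ → ℂ) (x : A) :
    (Function.support fun k => ε k • readIndexFilter read k x).Finite :=
  (finite_support_readIndexFilter x).subset fun _ hk => right_ne_zero_of_smul hk

variable (read)

def letterSymbol (ε₀ : ℂ) (ε : ℕ → ℂ) (w : F) : ℂ := (read w).elim ε₀ fun s => ε s.1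

def letterMultiplier (ε₀ : ℂ) (ε : ℕ → ℂ) : A →ₗ[ℂ] A where
  toFun x := (ε₀ * tau x) • lam 1 + ∑ᶠ k, ε k • readIndexFilter read k x
  map_add' x y := by
    simp only [map_add, smul_add, tau_add, mul_add, add_smul]
    rw [finsum_add_distrib (finite_support_smul_readIndexFilter ε x)
      (finite_support_smul_readIndexFilter ε y)]
    abel
  map_smul' c x := by
    rw [RingHom.id_apply, smul_add, smul_finsum' c
      (finite_support_smul_readIndexFilter ε x)]
    simp only [map_smul, tau_smul, smul_smul, smul_comm c]
    ring_nf

variable {read}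

theorem letterMultiplier_lam (hread : ∀ w, read w = none ↔ w = 1) (ε₀ : ℂ) (ε : ℕ → ℂ) (w : F) :
    letterMultiplier read ε₀ ε (lam w) = letterSymbol read ε₀ ε w • lam w := by
  change (ε₀ * tau (lam w)) • lam 1 + ∑ᶠ k, ε k • readIndexFilter read k (lam w) = _
  simp only [readIndexFilter_lam, letterSymbol, tau_lam]
  rcases hw : read w with _ | s
  · obtain rfl := (hread w).1 hw
    simp
  · have hw1 : w ≠ 1 := fun h => by simp [(hread w).2 h] at hw
    rw [finsum_eq_single _ s.1 (fun k hk => by simp [Ne.symm hk])]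
    simp [hw1]

theorem letterSymbol_one (hread : read 1 = none) (ε₀ : ℂ) (ε : ℕ → ℂ) :
    letterSymbol read ε₀ ε 1 = ε₀ := by
  rw [letterSymbol, hread, Option.elim_none]

end LetterMultiplier

theorem Heps_eq (εe : ℂ) (ε : ℕ → ℂ) : Heps εe ε = letterMultiplier firstL εe ε := rfl

theorem HepsOp_eq (εe : ℂ) (ε : ℕ → ℂ) :
    HepsOp εe ε = letterMultiplier lastL (starRingEnd ℂ εe) fun k => starRingEnd ℂ (ε k) := rfl

theorem starA_coeff (x : A) (w : F) : (starA x).coeff w = starRingEnd ℂ (x.coeff w⁻¹) := by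
  rw [starA, MonoidAlgebra.coeff_ofCoeff, ← inv_inv w,
    Finsupp.mapDomain_apply inv_injective, inv_inv, Finsupp.mapRange_apply]

theorem starA_zero : starA 0 = 0 := by
  ext w; simp [starA_coeff]

theorem starA_add (x y : A) : starA (x + y) = starA x + starA y := by
  ext w; simp [starA_coeff]

theorem starA_smul (c : ℂ) (x : A) : starA (c • x) = starRingEnd ℂ c • starA x := by
  ext w; simp [starA_coeff]

theorem starA_sub (x y : A) : starA (x - y) = starA x - starA y := by
  ext w; simp [starA_coeff]

theorem starA_lam (w : F) : starA (lam w) = lam w⁻¹ := by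
  ext v
  simp only [starA_coeff, lam, MonoidAlgebra.coeff_single, Finsupp.single_apply, inv_eq_iff_eq_inv]
  split_ifs <;> simp

theorem letterSymbol_lastL_inv (εe : ℂ) (ε : ℕ → ℂ) (g : F) :
    letterSymbol lastL (starRingEnd ℂ εe) (fun k => starRingEnd ℂ (ε k)) g⁻¹
      = starRingEnd ℂ (letterSymbol firstL εe ε g) := by
  rw [letterSymbol, letterSymbol, lastL_inv]
  cases firstL g <;> rfl

theorem letterSymbol_firstL_mul_eq_or_lastL_mul_eq {ε₀ ε₀' : ℂ} {ε ε' : ℕ → ℂ} {g h : F}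
    (hgh : g * h ≠ 1) :
    letterSymbol firstL ε₀ ε (g * h) = letterSymbol firstL ε₀ ε g
      ∨ letterSymbol lastL ε₀' ε' (g * h) = letterSymbol lastL ε₀' ε' h :=
  (firstL_mul_eq_or_lastL_mul_eq hgh).imp (congrArg (Option.elim · _ _))
    (congrArg (Option.elim · _ _))

theorem starA_Heps (εe : ℂ) (ε : ℕ → ℂ) (y : A) :
    starA (Heps εe ε y) = HepsOp εe ε (starA y) := by
  rw [Heps_eq, HepsOp_eq]
  induction y using MonoidAlgebra.induction_linear with
  | zero => rw [map_zero, starA_zero, map_zero]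
  | add y₁ y₂ h₁ h₂ => rw [map_add, starA_add, starA_add, map_add, h₁, h₂]
  | single g c =>
    rw [single_eq_smul_lam, map_smul, letterMultiplier_lam (fun _ => firstL_eq_none_iff),
      starA_smul, starA_smul, starA_smul, starA_lam, map_smul,
      letterMultiplier_lam (fun _ => lastL_eq_none_iff), letterSymbol_lastL_inv]

section Diagonal

variable (S T : A →ₗ[ℂ] A) (a b : ℂ)

def cotlarDefect : A →ₗ[ℂ] A →ₗ[ℂ] A :=
  LinearMap.mk₂ ℂ
    (fun x z => S x * T z - tau ((S x - a • x) * (T z - b • z)) • lam 1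
      - (S (x * T z) + T (S x * z) - T (S (x * z))))
    (fun x₁ x₂ z => by
      simp only [map_add, smul_add, add_sub_add_comm, add_mul, tau_add, add_smul]; abel)
    (fun c x z => by
      simp only [map_smul, smul_mul_assoc, smul_comm _ c, ← smul_sub, tau_smul, mul_smul]
      simp only [smul_sub, smul_add])
    (fun x z₁ z₂ => by
      simp only [map_add, smul_add, add_sub_add_comm, mul_add, tau_add, add_smul]; abel)
    (fun c x z => by
      simp only [map_smul, mul_smul_comm, smul_comm _ c, ← smul_sub, tau_smul, mul_smul]
      simp only [smul_sub, smul_add])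

variable {S T} {φ ψ : F → ℂ}

theorem cotlarDefect_lam (hS : ∀ w, S (lam w) = φ w • lam w) (hT : ∀ w, T (lam w) = ψ w • lam w)
    (hφψ : ∀ g h, g * h ≠ 1 → φ (g * h) = φ g ∨ ψ (g * h) = ψ h) (g h : F) :
    cotlarDefect S T (φ 1) (ψ 1) (lam g) (lam h) = 0 := by
  simp only [cotlarDefect, LinearMap.mk₂_apply, hS, hT, ← sub_smul, smul_mul_assoc, mul_smul_comm,
    lam_mul_lam, map_smul, smul_smul, tau_smul, tau_lam]
  by_cases hgh : g * h = 1
  · rw [if_pos hgh, hgh]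
    simp only [← add_smul, ← sub_smul]
    exact smul_eq_zero_of_left (by ring) _
  · rw [if_neg hgh, mul_zero, zero_smul, sub_zero]
    simp only [← add_smul, ← sub_smul]
    refine smul_eq_zero_of_left ?_ _
    rcases hφψ g h hgh with hφ | hψ
    · rw [hφ]; ring
    · rw [hψ]; ring

theorem cotlar_identity_of_diagonal (hS : ∀ w, S (lam w) = φ w • lam w)
    (hT : ∀ w, T (lam w) = ψ w • lam w)
    (hφψ : ∀ g h, g * h ≠ 1 → φ (g * h) = φ g ∨ ψ (g * h) = ψ h) (x z : A) :
    S x * T z - tau ((S x - φ 1 • x) * (T z - ψ 1 • z)) • lam 1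
      = S (x * T z) + T (S x * z) - T (S (x * z)) := by
  suffices cotlarDefect S T (φ 1) (ψ 1) x z = 0 from sub_eq_zero.1 this
  induction x using MonoidAlgebra.induction_linear with
  | zero => rw [map_zero, LinearMap.zero_apply]
  | add x₁ x₂ h₁ h₂ => rw [map_add, LinearMap.add_apply, h₁, h₂, add_zero]
  | single g c =>
    induction z using MonoidAlgebra.induction_linear with
    | zero => rw [map_zero]
    | add z₁ z₂ h₁ h₂ => rw [map_add, h₁, h₂, add_zero]
    | single h d =>
      rw [single_eq_smul_lam, single_eq_smul_lam, map_smul, map_smul, LinearMap.smul_apply,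
        cotlarDefect_lam hS hT hφψ, smul_zero, smul_zero]

end Diagonal

/-- the free Cotlar identity. -/
theorem free_cotlar_identity (εe εe' : ℂ) (ε ε' : ℕ → ℂ) (x y : A) :
    Heps εe ε x * starA (Heps εe' ε' y)
      - (tau ((Heps εe ε x - εe • x) * starA (Heps εe' ε' y - εe' • y))) • lam 1
    = Heps εe ε (x * HepsOp εe' ε' (starA y))
      + HepsOp εe' ε' (Heps εe ε x * starA y)
      - HepsOp εe' ε' (Heps εe ε (x * starA y)) := by
  rw [starA_sub, starA_smul, starA_Heps, Heps_eq, HepsOp_eq]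
  have key := cotlar_identity_of_diagonal
    (letterMultiplier_lam (read := firstL) (fun _ => firstL_eq_none_iff) εe ε)
    (letterMultiplier_lam (read := lastL) (fun _ => lastL_eq_none_iff)
      (starRingEnd ℂ εe') fun k => starRingEnd ℂ (ε' k))
    (fun _ _ => letterSymbol_firstL_mul_eq_or_lastL_mul_eq) x (starA y)
  rwa [letterSymbol_one (read := firstL) (firstL_eq_none_iff.2 rfl),
    letterSymbol_one (read := lastL) (lastL_eq_none_iff.2 rfl)] at key
end
end

section
/- For all x, y ∈ ℂ[F]: (a) x·y = x ‡ y + x † y + τ(x·y)·λ_e; (b) for any family (ε_s) of complex numbers indexed by the letters s, setting H_ε := Σ_s ε_s L_s and H_ε^{op} := Σ_s conj(ε_s) R_s, one has H_ε(x ‡ y) = (H_ε x) ‡ y and x † (H_ε^{op} y) = H_ε^{op}(x † y). -/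
open scoped Classical

noncomputable section

def HepsS (ε : Letter → ℂ) (x : A) : A := ∑ᶠ s : Letter, ε s • Ls s x

def HepsSop (ε : Letter → ℂ) (x : A) : A := ∑ᶠ s : Letter, ((starRingEnd ℂ) (ε s)) • Rs s x

/-!
Write `g = u w` and `h = w⁻¹ v` with `gh = u v` reduced; then `g⁻¹ ≤ h` exactly when `u` is empty.
Hence `x ‡ y`, `x † y` and `τ(xy) λ_e` are the product `xy` with the pairs `(g, h)` restricted to
`¬ g⁻¹ ≤ h`, to `g⁻¹ < h` and to `gh = e`, a partition of all pairs, which is (a). If `u` is nonempty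
the first letter of `gh` is that of `g`, and if `u` is empty but `v` is not, the last letter of `gh`
is that of `h`. So restricting supports by first letter commutes with `‡` in the left variable, and
by last letter with `†` in the right one; (b) follows by bilinearity, since only finitely many
letters occur in the support of an element.
-/

namespace FreeGroup

variable {α : Type*} [DecidableEq α]

theorem IsReduced.exists_reduce_append {u v : List (α × Bool)} (hu : IsReduced u)
    (hv : IsReduced v) :
    ∃ w u' v', u = u' ++ w ∧ v = invRev w ++ v' ∧ reduce (u ++ v) = u' ++ v' := by
  induction u using List.reverseRecOn generalizing v with
  | nil => exact ⟨[], [], v, rfl, rfl, hv.reduce_eq⟩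
  | append_singleton u a ih =>
    rcases v with _ | ⟨b, v⟩
    · exact ⟨[], u ++ [a], [], by simp, rfl, by simpa using hu.reduce_eq⟩
    by_cases hab : a.1 = b.1 ∧ a.2 ≠ b.2
    · obtain ⟨w, u', v', rfl, rfl, hred⟩ :=
        ih (v := v) (hu.infix ⟨[], [a], rfl⟩) (hv.infix ⟨[b], [], by simp⟩)
      have hb : b = (a.1, !a.2) := Prod.ext hab.1.symm (Bool.eq_not_iff.mpr (Ne.symm hab.2))
      refine ⟨w ++ [a], u', v', by simp, by simp [hb, invRev], ?_⟩
      have step : Red.Step (u' ++ w ++ [a] ++ b :: (invRev w ++ v'))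
          (u' ++ w ++ invRev w ++ v') := by
        simpa [hb] using Red.Step.not (L₁ := u' ++ w) (L₂ := invRev w ++ v') (x := a.1) (b := a.2)
      rw [reduce.Step.eq step, ← hred]
      simp
    · refine ⟨[], u ++ [a], b :: v, by simp, rfl, IsReduced.reduce_eq ?_⟩
      refine List.IsChain.append hu hv ?_
      simp only [List.getLast?_concat, List.head?_cons, Option.mem_some_iff]
      rintro _ rfl _ rfl
      push Not at hab
      exact hab

theorem exists_toWord_mul (g h : FreeGroup α) :
    ∃ w u v, g.toWord = u ++ w ∧ h.toWord = invRev w ++ v ∧ (g * h).toWord = u ++ v := by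
  rw [toWord_mul]
  exact isReduced_toWord.exists_reduce_append isReduced_toWord

end FreeGroup

open FreeGroup

theorem len_inv (g : F) : len g⁻¹ = len g := by
  simp [len, toWord_inv, invRev_length]

theorem isPrefix_inv_iff_eq_nil {g h : F} {w u v : List Letter} (hg : g.toWord = u ++ w)
    (hh : h.toWord = invRev w ++ v) (hgh : (g * h).toWord = u ++ v) :
    isPrefix g⁻¹ h ↔ u = [] := by
  rw [isPrefix, inv_inv, len_inv, len, len, len, hg, hh, hgh, ← List.length_eq_zero_iff]
  simp only [List.length_append, invRev_length]
  omega

theorem firstL_mul_of_not_isPrefix {g h : F} (hgh : ¬ isPrefix g⁻¹ h) :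
    firstL (g * h) = firstL g := by
  obtain ⟨w, u, v, hg, hh, hmul⟩ := exists_toWord_mul g h
  obtain ⟨a, u, rfl⟩ := List.exists_cons_of_ne_nil (mt (isPrefix_inv_iff_eq_nil hg hh hmul).mpr hgh)
  simp [firstL, hg, hmul]

theorem lastL_mul_of_isPrefix {g h : F} (hgh : isPrefix g⁻¹ h) (hne : g⁻¹ ≠ h) :
    lastL (g * h) = lastL h := by
  obtain ⟨w, u, v, hg, hh, hmul⟩ := exists_toWord_mul g h
  obtain rfl := (isPrefix_inv_iff_eq_nil hg hh hmul).mp hgh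
  have hv : v ≠ [] := by
    rw [List.nil_append] at hmul
    rwa [← hmul, Ne, toWord_eq_nil_iff, mul_eq_one_iff_inv_eq]
  rw [lastL, lastL, hmul, hh, List.nil_append, List.getLast?_append_of_ne_nil _ hv]

theorem isPrefix_inv_of_inv_eq {g h : F} (hgh : g⁻¹ = h) : isPrefix g⁻¹ h := by
  subst hgh
  simp [isPrefix, len]

namespace MonoidAlgebra

section Semiring

variable {R G : Type*} [Semiring R]

def filter (p : G → Prop) [DecidablePred p] (x : MonoidAlgebra R G) : MonoidAlgebra R G :=
  ofCoeff (x.coeff.filter p)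

theorem filter_single (p : G → Prop) [DecidablePred p] (g : G) (r : R) :
    filter p (single g r) = if p g then single g r else 0 := by
  split_ifs with hg
  · exact congrArg ofCoeff (Finsupp.filter_single_of_pos p hg)
  · exact congrArg ofCoeff (Finsupp.filter_single_of_neg p hg)

theorem filter_eq_single (x : MonoidAlgebra R G) (g : G) :
    filter (· = g) x = single g (x.coeff g) :=
  congrArg ofCoeff (Finsupp.filter_eq' x.coeff g)

theorem hasFiniteSupport_filter_eq_some {ι : Type*} (φ : G → Option ι) [DecidableEq ι]
    (x : MonoidAlgebra R G) :
    Function.HasFiniteSupport fun i => filter (fun g => φ g = some i) x := by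
  refine ((x.coeff.support.finite_toSet.image φ).preimage (Option.some_injective ι).injOn).subset ?_
  intro i hi
  obtain ⟨g, hg⟩ : ∃ g, (x.coeff.filter fun g => φ g = some i) g ≠ 0 := by
    by_contra! h
    exact hi (congrArg ofCoeff (Finsupp.ext h))
  rw [Finsupp.filter_apply] at hg
  split_ifs at hg with hφ
  · exact ⟨g, Finsupp.mem_support_iff.mpr hg, hφ⟩
  · exact absurd rfl hg

variable [Mul G]

def paraproduct (P : G → G → Prop) (x y : MonoidAlgebra R G) : MonoidAlgebra R G :=
  x.coeff.sum fun g a => y.coeff.sum fun h b => if P g h then single (g * h) (a * b) else 0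

theorem paraproduct_congr {P P' : G → G → Prop} (hP : ∀ g h, P g h ↔ P' g h)
    (x y : MonoidAlgebra R G) : paraproduct P x y = paraproduct P' x y := by
  obtain rfl : P = P' := funext₂ fun g h => propext (hP g h)
  rfl

variable (P : G → G → Prop)

theorem mul_eq_paraproduct_true (x y : MonoidAlgebra R G) :
    x * y = paraproduct (fun _ _ => True) x y := by
  simp [paraproduct, mul_def]

theorem paraproduct_add_paraproduct {Q : G → G → Prop} (hPQ : ∀ g h, P g h → ¬ Q g h)
    (x y : MonoidAlgebra R G) :
    paraproduct P x y + paraproduct Q x y = paraproduct (fun g h => P g h ∨ Q g h) x y := by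
  simp only [paraproduct, ← Finsupp.sum_add]
  refine Finsupp.sum_congr fun g _ => Finsupp.sum_congr fun h _ => ?_
  by_cases hP : P g h
  · simp [hP, hPQ g h hP]
  · by_cases hQ : Q g h <;> simp [hP, hQ]

theorem paraproduct_add_left (x₁ x₂ y : MonoidAlgebra R G) :
    paraproduct P (x₁ + x₂) y = paraproduct P x₁ y + paraproduct P x₂ y := by
  simp only [paraproduct, coeff_add]
  refine Finsupp.sum_add_index' (fun g => by simp) fun g a₁ a₂ => ?_
  simp only [← Finsupp.sum_add]
  refine Finsupp.sum_congr fun h _ => ?_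
  split_ifs <;> simp [add_mul]

theorem paraproduct_add_right (x y₁ y₂ : MonoidAlgebra R G) :
    paraproduct P x (y₁ + y₂) = paraproduct P x y₁ + paraproduct P x y₂ := by
  simp only [paraproduct, coeff_add, ← Finsupp.sum_add]
  refine Finsupp.sum_congr fun g _ => Finsupp.sum_add_index' (fun h => by simp) fun h b₁ b₂ => ?_
  split_ifs <;> simp [mul_add]

theorem paraproduct_smul_left (c : R) (x y : MonoidAlgebra R G) :
    paraproduct P (c • x) y = c • paraproduct P x y := by
  simp only [paraproduct, coeff_smul]
  rw [Finsupp.sum_smul_index' (fun g => by simp), Finsupp.smul_sum]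
  refine Finsupp.sum_congr fun g _ => ?_
  rw [Finsupp.smul_sum]
  refine Finsupp.sum_congr fun h _ => ?_
  split_ifs <;> simp [mul_assoc]

theorem filter_paraproduct (Q : G → Prop) [DecidablePred Q] (x y : MonoidAlgebra R G) :
    filter Q (paraproduct P x y) = paraproduct (fun g h => P g h ∧ Q (g * h)) x y := by
  simp only [paraproduct, Finsupp.sum, filter, coeff_sum, Finsupp.filter_sum, ofCoeff_sum]
  refine Finset.sum_congr rfl fun g _ => Finset.sum_congr rfl fun h _ => ?_
  rw [← filter]
  by_cases hP : P g h
  · simp [hP, filter_single]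
  · simp [hP, filter, Finsupp.filter_zero]

theorem paraproduct_filter_left (Q : G → Prop) [DecidablePred Q] (x y : MonoidAlgebra R G) :
    paraproduct P (filter Q x) y = paraproduct (fun g h => Q g ∧ P g h) x y := by
  rw [paraproduct, filter, coeff_ofCoeff, Finsupp.sum_filter_index, Finsupp.support_filter,
    Finset.sum_filter]
  refine Finset.sum_congr rfl fun g _ => ?_
  by_cases hg : Q g <;> simp [hg]

theorem paraproduct_filter_right (Q : G → Prop) [DecidablePred Q] (x y : MonoidAlgebra R G) :
    paraproduct P x (filter Q y) = paraproduct (fun g h => P g h ∧ Q h) x y := by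
  refine Finsupp.sum_congr fun g _ => ?_
  rw [filter, coeff_ofCoeff, Finsupp.sum_filter_index, Finsupp.support_filter, Finset.sum_filter]
  refine Finset.sum_congr rfl fun h _ => ?_
  by_cases hh : Q h <;> simp [hh]

theorem filter_paraproduct_of_left {Q : G → Prop} [DecidablePred Q]
    (hQ : ∀ g h, P g h → (Q (g * h) ↔ Q g)) (x y : MonoidAlgebra R G) :
    filter Q (paraproduct P x y) = paraproduct P (filter Q x) y := by
  rw [filter_paraproduct, paraproduct_filter_left]
  exact paraproduct_congr (fun g h => by have := hQ g h; tauto) x y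

theorem filter_paraproduct_of_right {Q : G → Prop} [DecidablePred Q]
    (hQ : ∀ g h, P g h → (Q (g * h) ↔ Q h)) (x y : MonoidAlgebra R G) :
    filter Q (paraproduct P x y) = paraproduct P x (filter Q y) := by
  rw [filter_paraproduct, paraproduct_filter_right]
  exact paraproduct_congr (fun g h => by have := hQ g h; tauto) x y

end Semiring

section CommSemiring

variable {R G : Type*} [CommSemiring R] [Mul G] (P : G → G → Prop)

theorem paraproduct_smul_right (c : R) (x y : MonoidAlgebra R G) :
    paraproduct P x (c • y) = c • paraproduct P x y := by
  simp only [paraproduct, coeff_smul, Finsupp.smul_sum]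
  refine Finsupp.sum_congr fun g _ => ?_
  rw [Finsupp.sum_smul_index' (fun h => by simp)]
  refine Finsupp.sum_congr fun h _ => ?_
  split_ifs <;> simp [mul_left_comm]

def paraproductₗ : MonoidAlgebra R G →ₗ[R] MonoidAlgebra R G →ₗ[R] MonoidAlgebra R G :=
  LinearMap.mk₂ R (paraproduct P) (paraproduct_add_left P) (paraproduct_smul_left P)
    (paraproduct_add_right P) (paraproduct_smul_right P)

end CommSemiring

end MonoidAlgebra

open MonoidAlgebra

theorem ddag_eq_paraproduct (x y : A) :
    ddag x y = paraproduct (fun g h => ¬ isPrefix g⁻¹ h) x y := by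
  simp only [ddag, paraproduct, lam, smul_single', mul_one]
  congr!

theorem dag_eq_paraproduct (x y : A) :
    dag x y = paraproduct (fun g h => isPrefix g⁻¹ h ∧ g⁻¹ ≠ h) x y := by
  simp only [dag, paraproduct, lam, smul_single', mul_one]
  congr!

theorem Ls_ddag (s : Letter) (x y : A) : Ls s (ddag x y) = ddag (Ls s x) y := by
  simp only [ddag_eq_paraproduct]
  exact filter_paraproduct_of_left _ (fun g h hgh => by rw [firstL_mul_of_not_isPrefix hgh]) x y

theorem Rs_dag (s : Letter) (x y : A) : Rs s (dag x y) = dag x (Rs s y) := by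
  simp only [dag_eq_paraproduct]
  exact filter_paraproduct_of_right _
    (fun g h hgh => by rw [lastL_mul_of_isPrefix hgh.1 hgh.2]) x y

theorem HepsS_ddag (ε : Letter → ℂ) (x y : A) : HepsS ε (ddag x y) = ddag (HepsS ε x) y := by
  let T := (paraproductₗ fun g h : F => ¬ isPrefix g⁻¹ h).flip y
  have hT (z : A) : T z = ddag z y := (ddag_eq_paraproduct z y).symm
  have hfin : Function.HasFiniteSupport fun s => ε s • Ls s x :=
    (hasFiniteSupport_filter_eq_some firstL x).smul_right ε
  calc HepsS ε (ddag x y) = ∑ᶠ s, T (ε s • Ls s x) :=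
        finsum_congr fun s => by rw [Ls_ddag, map_smul, hT]
    _ = ddag (HepsS ε x) y := by rw [← map_finsum T hfin, hT, HepsS]

theorem dag_HepsSop (ε : Letter → ℂ) (x y : A) : dag x (HepsSop ε y) = HepsSop ε (dag x y) := by
  let T := paraproductₗ (fun g h : F => isPrefix g⁻¹ h ∧ g⁻¹ ≠ h) x
  have hT (z : A) : T z = dag x z := (dag_eq_paraproduct x z).symm
  have hfin : Function.HasFiniteSupport fun s => starRingEnd ℂ (ε s) • Rs s y :=
    (hasFiniteSupport_filter_eq_some lastL y).smul_right fun s => starRingEnd ℂ (ε s)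
  calc dag x (HepsSop ε y) = ∑ᶠ s, T (starRingEnd ℂ (ε s) • Rs s y) := by
        rw [← map_finsum T hfin, hT, HepsSop]
    _ = HepsSop ε (dag x y) := finsum_congr fun s => by rw [map_smul, hT, Rs_dag]

theorem mul_eq_ddag_add_dag_add_tau (x y : A) :
    x * y = ddag x y + dag x y + tau (x * y) • lam 1 := by
  have htau : tau (x * y) • lam 1 = paraproduct (fun g h => g⁻¹ = h) x y := by
    rw [tau, lam, smul_single', mul_one, ← filter_eq_single, mul_eq_paraproduct_true,
      filter_paraproduct]
    exact paraproduct_congr (fun g h => by rw [true_and, mul_eq_one_iff_inv_eq]) x y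
  rw [ddag_eq_paraproduct, dag_eq_paraproduct, htau, paraproduct_add_paraproduct,
    paraproduct_add_paraproduct, mul_eq_paraproduct_true]
  · refine paraproduct_congr (fun g h => ?_) x y
    by_cases hgh : g⁻¹ = h
    · simp [hgh]
    · tauto
  · rintro g h (hg | ⟨-, hne⟩) hgh
    exacts [hg (isPrefix_inv_of_inv_eq hgh), hne hgh]
  · exact fun g h hg hg' => hg hg'.1

/-- paraproduct decomposition and intertwining with the free Hilbert
transforms. -/
theorem paraproduct_properties (x y : A) :
    (x * y = ddag x y + dag x y + tau (x * y) • lam 1) ∧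
    (∀ ε : Letter → ℂ,
      HepsS ε (ddag x y) = ddag (HepsS ε x) y ∧
      dag x (HepsSop ε y) = HepsSop ε (dag x y)) :=
  ⟨mul_eq_ddag_add_dag_add_tau x y, fun ε => ⟨HepsS_ddag ε x y, dag_HepsSop ε x y⟩⟩
end
end

section
/- (Truncated Cotlar identity for prefix/suffix Hilbert transforms of depth d.) Fix an integer d ≥ 1. Let P be the coefficient projection of ℂ[F] onto the span of {λ_w : |w| ≤ 2d−2} and P⊥ := id − P. Given any complex numbers ε′_e and (ε′_h)_{h∈F, |h|=d}, define H^{Ld}_{ε′} λ_w := ε′_h λ_w if |w| ≥ d, where h is the unique length-d prefix of w, and := ε′_e λ_w if |w| < d. Given any complex numbers ε_e and (ε_h)_{|h|=d}, define H^{Rd}_ε λ_w := ε_h λ_w if |w| ≥ d, where h is the unique length-d suffix of w (the h with |h| = d and |w·h⁻¹| = |w| − d), and := ε_e λ_w if |w| < d. Then for all x, y ∈ ℂ[F]: P⊥[(H^{Ld}_{ε′} x)·(H^{Rd}_ε y)] = P⊥[ H^{Ld}_{ε′}(x·(H^{Rd}_ε y)) + H^{Rd}_ε((H^{Ld}_{ε′}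 x)·y) − H^{Ld}_{ε′}(H^{Rd}_ε(x·y)) ]. -/
open scoped Classical

noncomputable section

/-- the length-`d` prefix of a word (meaningful when `d ≤ len w`). -/
def prefixWord (d : ℕ) (w : F) : F := FreeGroup.mk (w.toWord.take d)

/-- the length-`d` suffix of a word (meaningful when `d ≤ len w`). -/
def suffixWord (d : ℕ) (w : F) : F := FreeGroup.mk (w.toWord.drop (len w - d))

/-- `H^{Ld}_ε` : multiply `λ_w` by `ε_h` where `h` is the length-`d` prefix of `w`
(by `ε_e` if `|w| < d`). -/
def HLd (d : ℕ) (εe : ℂ) (ε : F → ℂ) (x : A) : A :=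
  Finsupp.sum x.coeff fun w c =>
    ((if d ≤ len w then ε (prefixWord d w) else εe) * c) • lam w

/-- `H^{Rd}_ε` : multiply `λ_w` by `ε_h` where `h` is the length-`d` suffix of `w`
(by `ε_e` if `|w| < d`). -/
def HRd (d : ℕ) (εe : ℂ) (ε : F → ℂ) (x : A) : A :=
  Finsupp.sum x.coeff fun w c =>
    ((if d ≤ len w then ε (suffixWord d w) else εe) * c) • lam w

/-- the projection `P⊥` killing all words of length `≤ 2d-2`. -/
def Pperp (d : ℕ) (x : A) : A := MonoidAlgebra.ofCoeff (Finsupp.filter (fun w => ¬ (len w ≤ 2 * d - 2)) x.coeff)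

/-!
All three operators are coefficient multipliers `λ_w ↦ m(w) λ_w`. For multipliers with symbols
`a`, `b`, `p`, evaluating both sides of the Cotlar identity on `λ_g ⊗ λ_h` leaves the defect
`p(gh) (a(g) - a(gh)) (b(h) - b(gh)) λ_{gh}`. If `|gh| ≥ 2d - 1`, the reduced word of `gh` is
`g'h'` where `g = g'c`, `h = c⁻¹h'`, and one of `g'`, `h'` has length at least `d`; so `gh` has
the same length-`d` prefix as `g` or the same length-`d` suffix as `h`, and the defect vanishes.
-/

namespace MonoidAlgebra

variable {k G : Type*} [CommRing k]

def multiplier (m : G → k) : MonoidAlgebra k G →ₗ[k] MonoidAlgebra k G where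
  toFun x := x.coeff.sum fun w c => single w (m w * c)
  map_add' x y := Finsupp.sum_add_index' (by simp) (by simp [mul_add, single_add])
  map_smul' r x := by
    rw [coeff_smul, Finsupp.sum_smul_index' (by simp), Finsupp.smul_sum]
    simp [smul_single, mul_left_comm]

@[simp]
theorem multiplier_single (m : G → k) (g : G) (c : k) :
    multiplier m (single g c) = single g (m g * c) := by
  change (single g c).coeff.sum (fun w c => single w (m w * c)) = _
  rw [coeff_single, Finsupp.sum_single_index (by simp)]

theorem coeff_multiplier_apply (m : G → k) (x : MonoidAlgebra k G) (w : G) :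
    (multiplier m x).coeff w = m w * x.coeff w := by
  induction x using induction_linear with
  | zero => simp
  | add x x' hx hx' => simp [coeff_add, hx, hx', mul_add]
  | single g c =>
    by_cases h : g = w
    · simp [h]
    · simp [h]

theorem multiplier_cotlar [Mul G] {a b p : G → k}
    (hsymb : ∀ g h, p (g * h) * (a g - a (g * h)) * (b h - b (g * h)) = 0)
    (x y : MonoidAlgebra k G) :
    multiplier p (multiplier a x * multiplier b y) =
      multiplier p (multiplier a (x * multiplier b y) + multiplier b (multiplier a x * y)
        - multiplier a (multiplier b (x * y))) := by
  induction x using induction_linear with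
  | zero => simp
  | add x x' hx hx' =>
    simp only [map_add, add_mul, map_sub] at hx hx' ⊢
    rw [hx, hx']
    abel
  | single g c =>
    induction y using induction_linear with
    | zero => simp
    | add y y' hy hy' =>
      simp only [map_add, mul_add, map_sub] at hy hy' ⊢
      rw [hy, hy']
      abel
    | single h c' =>
      simp only [multiplier_single, single_mul_single, ← single_add, ← single_sub]
      congr 1
      linear_combination c * c' * hsymb g h

end MonoidAlgebra

namespace FreeGroup

variable {α : Type*} [DecidableEq α]

theorem reduce_append_of_isReduced {L₁ L₂ : List (α × Bool)}
    (h₁ : IsReduced L₁) (h₂ : IsReduced L₂) :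
    ∃ t ≤ L₁.length, t ≤ L₂.length ∧
      reduce (L₁ ++ L₂) = L₁.take (L₁.length - t) ++ L₂.drop t := by
  induction L₁ using List.reverseRecOn generalizing L₂ with
  | nil => exact ⟨0, le_rfl, Nat.zero_le _, by simpa using h₂.reduce_eq⟩
  | append_singleton M a ih =>
    cases L₂ with
    | nil => exact ⟨0, Nat.zero_le _, le_rfl, by simp [h₁.reduce_eq]⟩
    | cons b N =>
      by_cases hab : a.1 = b.1 ∧ a.2 = !b.2
      · have hstep : Red.Step (M ++ [a] ++ b :: N) (M ++ N) := by
          obtain rfl : a = (b.1, !b.2) := Prod.ext hab.1 hab.2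
          simpa using Red.Step.not_rev (L₁ := M) (L₂ := N) (x := b.1) (b := b.2)
        obtain ⟨t, htM, htN, heq⟩ :=
          ih (h₁.infix (List.prefix_append M [a]).isInfix) (h₂.infix (List.suffix_cons b N).isInfix)
        refine ⟨t + 1, by simpa using htM, by simpa using htN, ?_⟩
        rw [reduce.Step.eq hstep, heq, List.length_append, List.length_singleton,
          Nat.add_sub_add_right, List.take_append_of_le_length (by omega)]
        simp
      · refine ⟨0, Nat.zero_le _, Nat.zero_le _, ?_⟩
        rw [Nat.sub_zero, List.take_length, List.drop_zero]
        refine IsReduced.reduce_eq (List.isChain_append.mpr ⟨h₁, h₂, ?_⟩)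
        simp only [List.getLast?_append, List.getLast?_singleton, Option.some_or,
          Option.mem_def, Option.some.injEq, List.head?_cons, forall_eq']
        intro h
        simpa [h, Bool.eq_not] using hab

theorem toWord_mul_eq_take_append_drop (x y : FreeGroup α) :
    ∃ t ≤ x.toWord.length, t ≤ y.toWord.length ∧
      (x * y).toWord = x.toWord.take (x.toWord.length - t) ++ y.toWord.drop t := by
  rw [toWord_mul]
  exact reduce_append_of_isReduced isReduced_toWord isReduced_toWord

end FreeGroup

theorem prefixWord_mul_or_suffixWord_mul {d : ℕ} {g h : F} (hgh : ¬ len (g * h) ≤ 2 * d - 2) :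
    (d ≤ len g ∧ prefixWord d (g * h) = prefixWord d g) ∨
      (d ≤ len h ∧ suffixWord d (g * h) = suffixWord d h) := by
  obtain ⟨t, htg, hth, hgh_word⟩ : ∃ t ≤ len g, t ≤ len h ∧
      (g * h).toWord = g.toWord.take (len g - t) ++ h.toWord.drop t :=
    FreeGroup.toWord_mul_eq_take_append_drop g h
  have hlg : len g = g.toWord.length := rfl
  have hlen : len (g * h) = (len g - t) + (len h - t) := by
    simp only [len] at htg hth ⊢
    simp [hgh_word]
    omega
  by_cases hd : d ≤ len g - t
  · refine .inl ⟨by omega, ?_⟩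
    rw [prefixWord, prefixWord, hgh_word, List.take_append_of_le_length (by simp; omega),
      List.take_take, min_eq_left hd]
  · refine .inr ⟨by omega, ?_⟩
    rw [suffixWord, suffixWord, hlen, hgh_word, List.drop_append, List.length_take,
      min_eq_left (by omega : len g - t ≤ g.toWord.length), List.drop_eq_nil_of_le (by simp; omega),
      List.nil_append, List.drop_drop]
    congr 2
    omega

def prefixSymbol (d : ℕ) (εe : ℂ) (ε : F → ℂ) (w : F) : ℂ :=
  if d ≤ len w then ε (prefixWord d w) else εe

def suffixSymbol (d : ℕ) (εe : ℂ) (ε : F → ℂ) (w : F) : ℂ :=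
  if d ≤ len w then ε (suffixWord d w) else εe

theorem sum_smul_lam_eq_multiplier (m : F → ℂ) (x : A) :
    (x.coeff.sum fun w c => (m w * c) • lam w) = MonoidAlgebra.multiplier m x := by
  simp only [lam, MonoidAlgebra.smul_single', mul_one]
  rfl

theorem HLd_eq_multiplier (d : ℕ) (εe : ℂ) (ε : F → ℂ) :
    HLd d εe ε = MonoidAlgebra.multiplier (prefixSymbol d εe ε) :=
  funext (sum_smul_lam_eq_multiplier _)

theorem HRd_eq_multiplier (d : ℕ) (εe : ℂ) (ε : F → ℂ) :
    HRd d εe ε = MonoidAlgebra.multiplier (suffixSymbol d εe ε) :=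
  funext (sum_smul_lam_eq_multiplier _)

theorem Pperp_eq_multiplier (d : ℕ) :
    Pperp d = MonoidAlgebra.multiplier fun w => if len w ≤ 2 * d - 2 then 0 else 1 := by
  ext x w
  rw [MonoidAlgebra.coeff_multiplier_apply, Pperp, MonoidAlgebra.coeff_ofCoeff,
    Finsupp.filter_apply]
  split_ifs <;> simp_all

theorem prefixSymbol_sub_mul_suffixSymbol_sub_eq_zero (d : ℕ) (εe' εe : ℂ) (ε' ε : F → ℂ)
    {g h : F} (hgh : ¬ len (g * h) ≤ 2 * d - 2) :
    (prefixSymbol d εe' ε' g - prefixSymbol d εe' ε' (g * h)) *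
      (suffixSymbol d εe ε h - suffixSymbol d εe ε (g * h)) = 0 := by
  have hd : d ≤ len (g * h) := by omega
  rcases prefixWord_mul_or_suffixWord_mul hgh with ⟨hg, hpre⟩ | ⟨hh, hsuf⟩
  · simp [prefixSymbol, hg, hd, hpre]
  · simp [suffixSymbol, hh, hd, hsuf]

theorem truncated_cotlar_general (d : ℕ) (εe' εe : ℂ) (ε' ε : F → ℂ) (x y : A) :
    Pperp d (HLd d εe' ε' x * HRd d εe ε y)
      = Pperp d (HLd d εe' ε' (x * HRd d εe ε y)
          + HRd d εe ε (HLd d εe' ε' x * y)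
          - HLd d εe' ε' (HRd d εe ε (x * y))) := by
  rw [HLd_eq_multiplier, HRd_eq_multiplier, Pperp_eq_multiplier]
  refine MonoidAlgebra.multiplier_cotlar (fun g h => ?_) x y
  split_ifs with hgh
  · rw [zero_mul, zero_mul]
  · rw [one_mul, prefixSymbol_sub_mul_suffixSymbol_sub_eq_zero d εe' εe ε' ε hgh]

/-- truncated Cotlar identity for prefix/suffix Hilbert transforms of
depth `d`. -/
theorem truncated_cotlar (d : ℕ) (hd : 1 ≤ d) (εe' εe : ℂ) (ε' ε : F → ℂ) (x y : A) :
    Pperp d (HLd d εe' ε' x * HRd d εe ε y)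
      = Pperp d (HLd d εe' ε' (x * HRd d εe ε y)
          + HRd d εe ε (HLd d εe' ε' x * y)
          - HLd d εe' ε' (HRd d εe ε (x * y))) :=
  truncated_cotlar_general d εe' εe ε' ε x y
end
end

section
/- On the Hilbert space ℓ²(F), let λ_g (g ∈ F) denote the left translation unitary δ_w ↦ δ_{gw}, and for h ∈ F∖{e} let R_h denote the orthogonal projection onto the closed span of {δ_w : |w·h⁻¹| = |w| − |h|} (the words ending with h). Then for every g ∈ F and every h ∈ F∖{e}, the commutator λ_g ∘ R_h − R_h ∘ λ_g is a finite-rank operator; indeed it vanishes on every basis vector δ_w with |w| ≥ |g| + |h|. -/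
open scoped Classical

noncomputable section

/-- `ℓ²(F)`. -/
abbrev H2 := lp (fun _ : F => ℂ) 2

/-- the basis vector `δ_w` of `ℓ²(F)`. -/
def delta (w : F) : H2 := lp.single 2 w (1 : ℂ)

/-!
Reducing the product of two reduced words cancels a suffix `C` of the first word against its
inverse at the start of the second. So `g` only touches the first `|g|` letters of `w`: when
`|w| ≥ |g| + |h|`, the word `gw` ends with `h` exactly when `w` does, and `R_h` commutes with `λ_g`
on `δ_w`. If `w = u h` ends with `h` but `gw` does not, the cancellation has eaten all of `u`, so
`u⁻¹` is a suffix of `g`; symmetrically with `g⁻¹` and `gw`. Hence the commutator kills all but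
finitely many basis vectors of `ℓ²(F)`, and a bounded operator with that property has finite rank.
-/

namespace FreeGroup

variable {α : Type*} [DecidableEq α]

theorem IsReduced.exists_reduce_append_eq {L₁ L₂ : List (α × Bool)}
    (h₁ : IsReduced L₁) (h₂ : IsReduced L₂) :
    ∃ P C Q, L₁ = P ++ C ∧ L₂ = invRev C ++ Q ∧ reduce (L₁ ++ L₂) = P ++ Q := by
  induction L₁ using List.reverseRecOn generalizing L₂ with
  | nil => exact ⟨[], [], L₂, rfl, rfl, isReduced_iff_reduce_eq.mp h₂⟩
  | append_singleton M x ih =>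
    cases L₂ with
    | nil => exact ⟨M ++ [x], [], [], by simp, rfl, by simpa using isReduced_iff_reduce_eq.mp h₁⟩
    | cons y T =>
      by_cases hxy : y = (x.1, !x.2)
      · obtain ⟨P, C, Q, rfl, rfl, hPQ⟩ :=
          ih (L₂ := T) (h₁.infix ⟨[], [x], rfl⟩) (h₂.infix ⟨[y], [], by simp⟩)
        refine ⟨P, C ++ [x], Q, by simp, by simp [hxy, invRev], ?_⟩
        rw [← hPQ, hxy]
        exact reduce.Step.eq (by simpa using Red.Step.not (L₁ := P ++ C) (x := x.1) (b := x.2))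
      · have hred : IsReduced (M ++ [x] ++ y :: T) := by
          refine List.IsChain.append h₁ h₂ ?_
          simp only [List.getLast?_concat, List.head?_cons, Option.mem_def, Option.some.injEq]
          rintro _ rfl _ rfl hx
          by_contra hb
          exact hxy (Prod.ext hx.symm (by revert hb; cases x.2 <;> cases y.2 <;> simp))
        exact ⟨M ++ [x], [], y :: T, by simp, rfl, by simpa using isReduced_iff_reduce_eq.mp hred⟩

theorem exists_toWord_mul_eq (x y : FreeGroup α) :
    ∃ P C Q, x.toWord = P ++ C ∧ y.toWord = invRev C ++ Q ∧ (x * y).toWord = P ++ Q := by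
  rw [toWord_mul]
  exact isReduced_toWord.exists_reduce_append_eq isReduced_toWord

theorem _root_.List.isSuffix_append_iff_of_length_le {β : Type*} {l l₁ l₂ : List β}
    (h : l.length ≤ l₂.length) : l <:+ l₁ ++ l₂ ↔ l <:+ l₂ :=
  ⟨fun hl => List.suffix_of_suffix_length_le hl (List.suffix_append l₁ l₂) h,
    fun hl => hl.trans (List.suffix_append l₁ l₂)⟩

theorem norm_mul_inv_add_norm_eq_iff_isSuffix {w h : FreeGroup α} :
    norm (w * h⁻¹) + norm h = norm w ↔ h.toWord <:+ w.toWord := by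
  constructor
  · intro hlen
    obtain ⟨P, C, Q, hwh, hh, hw⟩ := exists_toWord_mul_eq (w * h⁻¹) h
    rw [inv_mul_cancel_right] at hw
    have hC : C = [] := by
      simp only [norm, hwh, hh, hw, List.length_append, invRev_length] at hlen
      exact List.length_eq_zero_iff.mp (by omega)
    exact ⟨P, by rw [hw, hh, hC]; rfl⟩
  · rintro ⟨U, hU⟩
    have hUred : IsReduced U := isReduced_toWord.infix (hU ▸ (List.prefix_append U _).isInfix)
    have hwh : w * h⁻¹ = mk U := by
      rw [mul_inv_eq_iff_eq_mul, ← mk_toWord (x := h), mul_mk, hU, mk_toWord]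
    simp [norm, hwh, toWord_mk, hUred.reduce_eq, ← hU]

theorem isSuffix_toWord_mul_iff_of_norm_add_le {g h w : FreeGroup α}
    (hlen : norm g + norm h ≤ norm w) :
    h.toWord <:+ (g * w).toWord ↔ h.toWord <:+ w.toWord := by
  obtain ⟨P, C, Q, hg, hw, hgw⟩ := exists_toWord_mul_eq g w
  have hQ : h.toWord.length ≤ Q.length := by
    simp only [norm, hg, hw, List.length_append, invRev_length] at hlen
    omega
  rw [hgw, hw, List.isSuffix_append_iff_of_length_le hQ, List.isSuffix_append_iff_of_length_le hQ]

theorem exists_isSuffix_eq_inv_mk_mul {g h w : FreeGroup α} (hw : h.toWord <:+ w.toWord)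
    (hgw : ¬h.toWord <:+ (g * w).toWord) : ∃ s, s <:+ g.toWord ∧ w = (mk s)⁻¹ * h := by
  obtain ⟨P, C, Q, hg, hw', hgw'⟩ := exists_toWord_mul_eq g w
  have hQ : Q.length < h.toWord.length := by
    by_contra! hQ
    rw [hw', List.isSuffix_append_iff_of_length_le hQ] at hw
    exact hgw (hgw' ▸ hw.trans (List.suffix_append P Q))
  obtain ⟨U, hU⟩ := hw
  have hUC : U <+: invRev C := by
    refine List.prefix_of_prefix_length_le ⟨h.toWord, hU⟩ ⟨Q, hw'.symm⟩ ?_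
    have := congrArg List.length (hU.trans hw')
    simp only [List.length_append] at this
    omega
  refine ⟨invRev U, ?_, ?_⟩
  · have hUC' : invRev U <:+ invRev (invRev C) := List.reverse_suffix.mpr (hUC.map _)
    rw [invRev_invRev] at hUC'
    exact hUC'.trans ⟨P, hg.symm⟩
  · rw [inv_mk, invRev_invRev, ← mk_toWord (x := h), mul_mk, hU, mk_toWord]

theorem finite_setOf_not_isSuffix_toWord_mul_iff (g h : FreeGroup α) :
    {w | ¬(h.toWord <:+ (g * w).toWord ↔ h.toWord <:+ w.toWord)}.Finite := by
  have hsuffixes : ∀ x : FreeGroup α, {s | s <:+ x.toWord}.Finite := fun x => by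
    simpa only [List.mem_tails] using x.toWord.tails.finite_toSet
  refine (((hsuffixes g).image fun s => (mk s)⁻¹ * h).union
    ((hsuffixes g⁻¹).image fun s => g⁻¹ * ((mk s)⁻¹ * h))).subset fun w hw => ?_
  by_cases hsw : h.toWord <:+ w.toWord
  · obtain ⟨s, hs, rfl⟩ := exists_isSuffix_eq_inv_mk_mul hsw fun hsgw => hw (iff_of_true hsgw hsw)
    exact Or.inl ⟨s, hs, rfl⟩
  · have hsgw : h.toWord <:+ (g * w).toWord := not_not.mp fun hsgw => hw (iff_of_false hsgw hsw)
    obtain ⟨s, hs, hgw⟩ :=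
      exists_isSuffix_eq_inv_mk_mul (g := g⁻¹) hsgw (by rwa [inv_mul_cancel_left])
    exact Or.inr ⟨s, hs, show g⁻¹ * ((mk s)⁻¹ * h) = w by rw [← hgw, inv_mul_cancel_left]⟩

end FreeGroup

theorem lp.finiteDimensional_range_of_apply_single_eq_zero {𝕜 ι E : Type*}
    [NontriviallyNormedField 𝕜] [NormedAddCommGroup E] [NormedSpace 𝕜 E] [DecidableEq ι]
    {p : ENNReal} [Fact (1 ≤ p)] (hp : p ≠ ⊤) (T : lp (fun _ : ι => 𝕜) p →L[𝕜] E)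
    {S : Set ι} (hS : S.Finite) (hT : ∀ i ∉ S, T (lp.single p i 1) = 0) :
    FiniteDimensional 𝕜 (LinearMap.range (T : lp (fun _ : ι => 𝕜) p →ₗ[𝕜] E)) := by
  set V := Submodule.span 𝕜 ((fun i => T (lp.single p i 1)) '' S)
  have : FiniteDimensional 𝕜 V := FiniteDimensional.span_of_finite 𝕜 (hS.image _)
  refine Submodule.finiteDimensional_of_le (S₂ := V) ?_
  rintro _ ⟨f, rfl⟩
  change T f ∈ _
  have hsum : HasSum (fun i => f i • T (lp.single p i 1)) (T f) := by
    simpa only [← map_smul, ← lp.single_smul, smul_eq_mul, mul_one] using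
      (lp.hasSum_single hp f).mapL T
  rw [hsum.unique (hasSum_sum_of_ne_finset_zero (s := hS.toFinset) fun i hi => by
    rw [hT i (by simpa using hi), smul_zero])]
  exact Submodule.sum_mem _ fun i hi =>
    Submodule.smul_mem _ _ (Submodule.subset_span ⟨i, by simpa using hi, rfl⟩)

theorem commutator_translation_suffix_finite_rank_general (g h : F)
    (Tg Rh : H2 →L[ℂ] H2)
    (hTg : ∀ w : F, Tg (delta w) = delta (g * w))
    (hRh : ∀ w : F, Rh (delta w) =
      if len (w * h⁻¹) + len h = len w then delta w else 0) :
    (∀ w : F, len g + len h ≤ len w → (Tg ∘L Rh - Rh ∘L Tg) (delta w) = 0) ∧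
    FiniteDimensional ℂ
      (LinearMap.range ((Tg ∘L Rh - Rh ∘L Tg : H2 →L[ℂ] H2) : H2 →ₗ[ℂ] H2)) := by
  have hRh' : ∀ w : F, Rh (delta w) = if h.toWord <:+ w.toWord then delta w else 0 := fun w => by
    rw [hRh]
    exact if_congr FreeGroup.norm_mul_inv_add_norm_eq_iff_isSuffix rfl rfl
  have hcomm : ∀ w : F, (h.toWord <:+ (g * w).toWord ↔ h.toWord <:+ w.toWord) →
      (Tg ∘L Rh - Rh ∘L Tg) (delta w) = 0 := fun w hw => by
    simp only [sub_apply, ContinuousLinearMap.comp_apply, hRh', hTg, hw]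
    split_ifs <;> simp [hTg]
  exact ⟨fun w hw => hcomm w (FreeGroup.isSuffix_toWord_mul_iff_of_norm_add_le hw),
    lp.finiteDimensional_range_of_apply_single_eq_zero (by norm_num) _
      (FreeGroup.finite_setOf_not_isSuffix_toWord_mul_iff g h) fun w hw => hcomm w (not_not.mp hw)⟩

/-- the commutator of a left translation `λ_g` with the suffix projection
`R_h` vanishes on every `δ_w` with `|w| ≥ |g| + |h|`, and is a finite rank operator. -/
theorem commutator_translation_suffix_finite_rank (g h : F) (hh : h ≠ 1)
    (Tg Rh : H2 →L[ℂ] H2)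
    (hTg : ∀ w : F, Tg (delta w) = delta (g * w))
    (hRh : ∀ w : F, Rh (delta w) =
      if len (w * h⁻¹) + len h = len w then delta w else 0) :
    (∀ w : F, len g + len h ≤ len w → (Tg ∘L Rh - Rh ∘L Tg) (delta w) = 0) ∧
    FiniteDimensional ℂ
      (LinearMap.range ((Tg ∘L Rh - Rh ∘L Tg : H2 →L[ℂ] H2) : H2 →ₗ[ℂ] H2)) :=
  commutator_translation_suffix_finite_rank_general g h Tg Rh hTg hRh
end
end
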